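/- The comultiplication of the modular automorphism of the right integral is given by Δ(σ'(a)) = (σ' ⊗ S⁻²)(Δ(a)), i.e. Δ(σ'(a)) = Σ σ'(a₍₁₎) ⊗ S⁻²(a₍₂₎), for every a ∈ A. -/

import Mathlib

open TensorProduct HopfAlgebra

/-!
Write `ψ = φ ∘ S` and slice with `ψ ⊗ id`. Since `Σ b₁ ⊗ b₂ S(b₃) = b ⊗ 1`, right invariance of `ψ`
upgrades to its strong form `Σ ψ(a b₁) S(b₂) = Σ ψ(a₁ b) a₂`; applying `S` gives the same with `S²`
on the left and `S` on the right. Combined with `ψ(c u) = ψ(u σ'(c))`, this shows that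
`(id ⊗ S²) Δ(σ' a)` and `(σ' ⊗ id) Δ a` have the same slices `(ψ ⊗ id)((x ⊗ 1) · _)` for every `x`,
namely `Σ ψ(a₁ x) a₂`. Faithfulness of `ψ` makes these slices separate the points of `A ⊗ A`.
-/

namespace TensorProduct

section

variable {R M N P : Type*} [CommSemiring R] [AddCommMonoid M] [Module R M]
  [AddCommMonoid N] [Module R N] [AddCommMonoid P] [Module R P]

def leftSlice (ψ : M →ₗ[R] R) : M ⊗[R] N →ₗ[R] N :=
  (TensorProduct.lid R N).toLinearMap ∘ₗ ψ.rTensor N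

@[simp]
lemma leftSlice_tmul (ψ : M →ₗ[R] R) (m : M) (n : N) : leftSlice ψ (m ⊗ₜ n) = ψ m • n := rfl

lemma leftSlice_rTensor (ψ : P →ₗ[R] R) (f : M →ₗ[R] P) (w : M ⊗[R] N) :
    leftSlice ψ (f.rTensor N w) = leftSlice (ψ ∘ₗ f) w := by
  simp [leftSlice, ← LinearMap.rTensor_comp_apply]

lemma apply_leftSlice (ψ : M →ₗ[R] R) (g : N →ₗ[R] P) (w : M ⊗[R] N) :
    g (leftSlice ψ w) = leftSlice ψ (g.lTensor M w) := by
  induction w using TensorProduct.induction_on with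
  | zero => simp
  | tmul m n => simp
  | add v w hv hw => simp [hv, hw]

lemma eq_zero_of_forall_rid_lTensor_eq_zero [Module.Free R N] (w : M ⊗[R] N)
    (h : ∀ f : N →ₗ[R] R, TensorProduct.rid R M (f.lTensor M w) = 0) : w = 0 := by
  classical
  apply (equivFinsuppOfBasisRight (Module.Free.chooseBasis R N)).injective
  ext i
  simp [equivFinsuppOfBasisRight_apply, h]

end

section Algebra

variable {R A : Type*}

section Semiring

variable [CommSemiring R] [Semiring A] [Algebra R A]

lemma tmul_one_mul (x : A) (w : A ⊗[R] A) :
    (x ⊗ₜ[R] (1 : A)) * w = (LinearMap.mulLeft R x).rTensor A w := by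
  rw [← LinearMap.mulLeft_apply (R := R), LinearMap.mulLeft_tmul, LinearMap.mulLeft_one]
  rfl

lemma mul_tmul_one (x : A) (w : A ⊗[R] A) :
    w * (x ⊗ₜ[R] (1 : A)) = (LinearMap.mulRight R x).rTensor A w := by
  rw [← LinearMap.mulRight_apply (R := R), LinearMap.mulRight_tmul, LinearMap.mulRight_one]
  rfl

lemma mul_one_tmul (x : A) (w : A ⊗[R] A) :
    w * ((1 : A) ⊗ₜ[R] x) = (LinearMap.mulRight R x).lTensor A w := by
  rw [← LinearMap.mulRight_apply (R := R), LinearMap.mulRight_tmul, LinearMap.mulRight_one]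
  rfl

lemma tmul_one_mul_lTensor (g : A →ₗ[R] A) (x : A) (w : A ⊗[R] A) :
    (x ⊗ₜ[R] (1 : A)) * g.lTensor A w = g.lTensor A ((x ⊗ₜ 1) * w) := by
  rw [tmul_one_mul, tmul_one_mul, ← LinearMap.comp_apply, ← LinearMap.comp_apply (f := g.lTensor A),
    LinearMap.rTensor_comp_lTensor, LinearMap.lTensor_comp_rTensor]

lemma lTensor_mul_tmul_one (g : A →ₗ[R] A) (x : A) (w : A ⊗[R] A) :
    g.lTensor A w * (x ⊗ₜ[R] (1 : A)) = g.lTensor A (w * (x ⊗ₜ 1)) := by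
  rw [mul_tmul_one, mul_tmul_one, ← LinearMap.comp_apply, ← LinearMap.comp_apply (f := g.lTensor A),
    LinearMap.rTensor_comp_lTensor, LinearMap.lTensor_comp_rTensor]

variable {ψ : A →ₗ[R] R} {σ : A ≃ₐ[R] A}

lemma leftSlice_mul_tmul_one_of_modular (hσ : ∀ a b, ψ (a * b) = ψ (b * σ a)) (c : A)
    (w : A ⊗[R] A) : leftSlice ψ (w * (σ c ⊗ₜ 1)) = leftSlice ψ ((c ⊗ₜ 1) * w) := by
  have : ψ ∘ₗ LinearMap.mulRight R (σ c) = ψ ∘ₗ LinearMap.mulLeft R c :=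
    LinearMap.ext fun b => (hσ c b).symm
  rw [mul_tmul_one, tmul_one_mul, leftSlice_rTensor, leftSlice_rTensor, this]

lemma leftSlice_tmul_one_mul_rTensor_of_modular (hσ : ∀ a b, ψ (a * b) = ψ (b * σ a)) (x : A)
    (w : A ⊗[R] A) :
    leftSlice ψ ((x ⊗ₜ 1) * σ.toLinearMap.rTensor A w) = leftSlice ψ (w * (x ⊗ₜ 1)) := by
  have : ψ ∘ₗ LinearMap.mulLeft R x ∘ₗ σ.toLinearMap = ψ ∘ₗ LinearMap.mulRight R x :=
    LinearMap.ext fun b => (hσ b x).symm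
  rw [tmul_one_mul, mul_tmul_one, ← LinearMap.rTensor_comp_apply, leftSlice_rTensor,
    leftSlice_rTensor, this]

end Semiring

variable [CommRing R] [Ring A] [Algebra R A] [Module.Free R A] {ψ : A →ₗ[R] R}

lemma ext_of_leftSlice_tmul_one_mul (hψ : ∀ c, (∀ x, ψ (x * c) = 0) → c = 0) {v w : A ⊗[R] A}
    (h : ∀ x, leftSlice ψ ((x ⊗ₜ 1) * v) = leftSlice ψ ((x ⊗ₜ 1) * w)) : v = w := by
  rw [← sub_eq_zero]
  refine eq_zero_of_forall_rid_lTensor_eq_zero _ fun f => hψ _ fun x => ?_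
  have hf : ∀ u : A ⊗[R] A,
      f (leftSlice ψ ((x ⊗ₜ 1) * u)) = ψ (x * TensorProduct.rid R A (f.lTensor A u)) := by
    intro u
    induction u using TensorProduct.induction_on with
    | zero => simp
    | tmul a b => simp [mul_comm]
    | add u u' hu hu' => simp [mul_add, hu, hu']
  rw [← hf, mul_sub, map_sub, h, sub_self, map_zero]

end Algebra

end TensorProduct

namespace HopfAlgebra

open Coalgebra Algebra.TensorProduct

section Semiring

variable {R A : Type*} [CommSemiring R] [Semiring A] [HopfAlgebra R A] {ψ : A →ₗ[R] R}

variable (R A) in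
noncomputable def comulMulAntipode : A ⊗[R] A →ₗ[R] A ⊗[R] A :=
  LinearMap.mul' R (A ⊗[R] A) ∘ₗ TensorProduct.map comul (includeRight.toLinearMap ∘ₗ antipode R)

@[simp]
lemma comulMulAntipode_tmul (u v : A) :
    comulMulAntipode R A (u ⊗ₜ v) = comul u * ((1 : A) ⊗ₜ antipode R v) := rfl

lemma comulMulAntipode_eq :
    comulMulAntipode R A = ((LinearMap.mul' R A ∘ₗ (antipode R).lTensor A).lTensor A) ∘ₗ
      (TensorProduct.assoc R A A A).toLinearMap ∘ₗ (comul (R := R) (A := A)).rTensor A := by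
  refine TensorProduct.ext' fun u v => ?_
  suffices ∀ w : A ⊗[R] A, w * ((1 : A) ⊗ₜ antipode R v) =
      ((LinearMap.mul' R A ∘ₗ (antipode R).lTensor A).lTensor A)
        (TensorProduct.assoc R A A A (w ⊗ₜ v)) from this (comul u)
  intro w
  induction w using TensorProduct.induction_on with
  | zero => simp
  | tmul x y => simp
  | add w w' hw hw' => simp [add_mul, add_tmul, hw, hw']

lemma comulMulAntipode_comul (b : A) : comulMulAntipode R A (comul b) = b ⊗ₜ 1 := by
  calc comulMulAntipode R A (comul b)
      = ((LinearMap.mul' R A ∘ₗ (antipode R).lTensor A).lTensor A)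
          (TensorProduct.assoc R A A A (comul.rTensor A (comul b))) := by
        rw [comulMulAntipode_eq]; rfl
    _ = ((LinearMap.mul' R A ∘ₗ (antipode R).lTensor A ∘ₗ comul).lTensor A) (comul b) := by
        rw [coassoc_apply]; simp only [LinearMap.lTensor_comp_apply]
    _ = b ⊗ₜ 1 := by
        rw [mul_antipode_lTensor_comul, LinearMap.lTensor_comp_apply, lTensor_counit_comul]
        simp

lemma comulMulAntipode_tmul_one_mul (a : A) (w : A ⊗[R] A) :
    comulMulAntipode R A ((a ⊗ₜ 1) * w) = comul a * comulMulAntipode R A w := by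
  induction w using TensorProduct.induction_on with
  | zero => simp
  | tmul u v => simp [Bialgebra.comul_mul, mul_assoc]
  | add v w hv hw => simp [mul_add, hv, hw]

lemma leftSlice_comulMulAntipode (hψ : ∀ a, leftSlice ψ (comul a) = ψ a • (1 : A))
    (w : A ⊗[R] A) :
    leftSlice ψ (comulMulAntipode R A w) = leftSlice ψ ((antipode R).lTensor A w) := by
  induction w using TensorProduct.induction_on with
  | zero => simp
  | tmul u v =>
    rw [comulMulAntipode_tmul, mul_one_tmul, ← apply_leftSlice, hψ]
    simp
  | add v w hv hw => simp [hv, hw]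

lemma leftSlice_lTensor_antipode_tmul_one_mul_comul
    (hψ : ∀ a, leftSlice ψ (comul a) = ψ a • (1 : A)) (a b : A) :
    leftSlice ψ ((antipode R).lTensor A ((a ⊗ₜ 1) * comul b)) =
      leftSlice ψ (comul a * (b ⊗ₜ 1)) := by
  rw [← comulMulAntipode_comul b, ← comulMulAntipode_tmul_one_mul,
    leftSlice_comulMulAntipode hψ]

lemma leftSlice_lTensor_antipode_sq_tmul_one_mul_comul
    (hψ : ∀ a, leftSlice ψ (comul a) = ψ a • (1 : A)) (a b : A) :
    leftSlice ψ ((antipode R ∘ₗ antipode R).lTensor A ((a ⊗ₜ 1) * comul b)) =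
      leftSlice ψ ((antipode R).lTensor A (comul a * (b ⊗ₜ 1))) := by
  rw [LinearMap.lTensor_comp_apply, ← apply_leftSlice,
    leftSlice_lTensor_antipode_tmul_one_mul_comul hψ, apply_leftSlice]

lemma faithful_comp_antipode {φ : A →ₗ[R] R} (hS : Function.Bijective (antipode R : A → A))
    (hφ : ∀ a, (∀ b, φ (a * b) = 0) → a = 0) (c : A) (hc : ∀ x, φ (antipode R (x * c)) = 0) :
    c = 0 := by
  refine hS.injective ((hφ _ fun b => ?_).trans (map_zero _).symm)
  obtain ⟨x, rfl⟩ := hS.surjective b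
  rw [← antipode_mul_antidistrib]
  exact hc x

end Semiring

variable {R A : Type*} [CommRing R] [Ring A] [HopfAlgebra R A] [Module.Free R A]
  {ψ : A →ₗ[R] R} {σ : A ≃ₐ[R] A}

theorem lTensor_antipode_sq_comul_of_modular (hψ : ∀ a, leftSlice ψ (comul a) = ψ a • (1 : A))
    (hψ_faithful : ∀ c, (∀ x, ψ (x * c) = 0) → c = 0) (hσ : ∀ a b, ψ (a * b) = ψ (b * σ a))
    (a : A) :
    (antipode R ∘ₗ antipode R).lTensor A (comul (σ a)) = σ.toLinearMap.rTensor A (comul a) := by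
  refine ext_of_leftSlice_tmul_one_mul hψ_faithful fun x => ?_
  calc leftSlice ψ ((x ⊗ₜ 1) * (antipode R ∘ₗ antipode R).lTensor A (comul (σ a)))
      = leftSlice ψ ((antipode R).lTensor A (comul x) * (σ a ⊗ₜ 1)) := by
        rw [tmul_one_mul_lTensor, leftSlice_lTensor_antipode_sq_tmul_one_mul_comul hψ,
          lTensor_mul_tmul_one]
    _ = leftSlice ψ ((antipode R).lTensor A ((a ⊗ₜ 1) * comul x)) := by
        rw [leftSlice_mul_tmul_one_of_modular hσ, tmul_one_mul_lTensor]
    _ = leftSlice ψ ((x ⊗ₜ 1) * σ.toLinearMap.rTensor A (comul a)) := by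
        rw [leftSlice_lTensor_antipode_tmul_one_mul_comul hψ,
          leftSlice_tmul_one_mul_rTensor_of_modular hσ]

end HopfAlgebra

theorem comul_modular_automorphism_right
    {A : Type*} [Ring A] [HopfAlgebra ℂ A]
    (Sinv : A →ₗ[ℂ] A)
    (hSinv₁ : ∀ a : A, Sinv (antipode (R := ℂ) a) = a)
    (hSinv₂ : ∀ a : A, antipode (R := ℂ) (Sinv a) = a)
    (φ : A →ₗ[ℂ] ℂ)
    (hφf1 : ∀ a : A, (∀ b : A, φ (a * b) = 0) → a = 0)
    (hψR : ∀ a : A,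
      (TensorProduct.lid ℂ A) (LinearMap.rTensor A (φ ∘ₗ antipode (R := ℂ))
        (Coalgebra.comul a)) = φ (antipode (R := ℂ) a) • (1 : A))
    (σ' : A ≃ₐ[ℂ] A)
    (hσ' : ∀ a b : A, φ (antipode (R := ℂ) (a * b)) = φ (antipode (R := ℂ) (b * σ' a))) :
    ∀ a : A,
      Coalgebra.comul (R := ℂ) (σ' a) =
        TensorProduct.map σ'.toLinearMap (Sinv ∘ₗ Sinv) (Coalgebra.comul a) := by
  intro a
  have hS : Function.Bijective (antipode ℂ : A → A) :=
    ⟨Function.LeftInverse.injective hSinv₁, Function.RightInverse.surjective hSinv₂⟩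
  have key := lTensor_antipode_sq_comul_of_modular (ψ := φ ∘ₗ antipode ℂ) hψR
    (faithful_comp_antipode hS hφf1) hσ' a
  have hSinv : Sinv ∘ₗ Sinv ∘ₗ antipode ℂ ∘ₗ antipode ℂ = LinearMap.id :=
    LinearMap.ext fun b => by simp [hSinv₁]
  rw [← LinearMap.lTensor_comp_rTensor, LinearMap.comp_apply, ← key,
    ← LinearMap.lTensor_comp_apply, LinearMap.comp_assoc, hSinv, LinearMap.lTensor_id_apply]
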